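/- arXiv:2009.00152 — 4 statements merged into one kernel-verified Lean document; each statement's English description precedes it below -/
import Mathlib

section
/- Let G be a group and g, h, x ∈ G. If gh ∈ ⟨⟨x⟩⟩⁺, then g^n h^n ∈ ⟨⟨x⟩⟩⁺ for every integer n > 0. -/
/-- `⟨⟨g⟩⟩⁺`: the set of all non-empty finite products of conjugates of `g`. -/
def conjProdSet {G : Type*} [Group G] (g : G) : Set G :=
  {a | ∃ xs : List G, xs ≠ [] ∧ (xs.map (fun x => x * g * x⁻¹)).prod = a}

lemma conjProdSet.mul_mem {G : Type*} [Group G] {x a b : G}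
    (ha : a ∈ conjProdSet x) (hb : b ∈ conjProdSet x) : a * b ∈ conjProdSet x := by
  obtain ⟨xs, hxs, rfl⟩ := ha
  obtain ⟨ys, hys, rfl⟩ := hb
  exact ⟨xs ++ ys, by simp [hxs], by simp⟩

lemma conjProdSet.conj_mem {G : Type*} [Group G] {x a : G} (c : G)
    (ha : a ∈ conjProdSet x) : c * a * c⁻¹ ∈ conjProdSet x := by
  obtain ⟨xs, hxs, rfl⟩ := ha
  refine ⟨xs.map (c * ·), by simp [hxs], ?_⟩
  clear hxs
  induction xs with
  | nil => simp
  | cons y ys ih =>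
    simp only [List.map_cons, List.prod_cons] at *
    rw [ih]
    group

/-- Lemma 4.1(2): if `gh ∈ ⟨⟨x⟩⟩⁺`, then `gⁿhⁿ ∈ ⟨⟨x⟩⟩⁺` for all `n > 0`. -/
theorem pow_mul_pow_mem_of_mul_mem {G : Type*} [Group G] (g h x : G)
    (hgh : g * h ∈ conjProdSet x) (n : ℕ) (hn : 0 < n) :
    g ^ n * h ^ n ∈ conjProdSet x := by
  induction n with
  | zero => exact absurd hn (by simp)
  | succ n ih =>
    rcases Nat.eq_zero_or_pos n with rfl | hn'
    · simpa using hgh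
    · have key : g ^ (n + 1) * h ^ (n + 1) = (g * (g ^ n * h ^ n) * g⁻¹) * (g * h) := by
        rw [pow_succ, pow_succ']
        group
      rw [key]
      exact conjProdSet.mul_mem (conjProdSet.conj_mem g (ih hn')) hgh
end

section
/- Let G be a group and x, y ∈ G, with commutator convention [a,b] = a⁻¹b⁻¹ab. Suppose there is an integer q ≥ 1 such that x commutes with y^q (i.e., [x, y^q] = 1), and suppose [x, y] ≠ 1. Then [x, y] is a generalized torsion element of G. -/
/-- `g` is a generalized torsion element of `G`: `g ≠ 1` and some non-empty
finite product of conjugates of `g` equals `1`. -/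
def IsGeneralizedTorsion {G : Type*} [Group G] (g : G) : Prop :=
  g ≠ 1 ∧ ∃ xs : List G, xs ≠ [] ∧ (xs.map (fun x => x * g * x⁻¹)).prod = 1

/-- The commutator, with the convention `[a,b] = a⁻¹b⁻¹ab`. -/
def com {G : Type*} [Group G] (a b : G) : G := a⁻¹ * b⁻¹ * a * b

lemma com_aux {G : Type*} [Group G] (x y : G) :
    ∀ k : ℕ, ((List.range k).map (fun i => (y ^ i)⁻¹ * com x y * ((y ^ i)⁻¹)⁻¹)).prod
      = com x (y ^ k) := by
  intro k
  induction k with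
  | zero => simp [com]
  | succ k ih =>
      rw [List.range_succ, List.map_append, List.prod_append, ih]
      simp only [List.map_cons, List.map_nil, List.prod_cons, List.prod_nil, mul_one]
      simp only [com, pow_succ]
      group

/-- If `x` commutes with `y^q` for some `q ≥ 1` and `[x,y] ≠ 1`, then `[x,y]`
is a generalized torsion element. -/
theorem isGeneralizedTorsion_commutator_of_commute_pow {G : Type*} [Group G]
    (x y : G) (q : ℕ) (hq : 1 ≤ q) (hcomm : com x (y ^ q) = 1)
    (hne : com x y ≠ 1) :
    IsGeneralizedTorsion (com x y) := by
  refine ⟨hne, (List.range q).map (fun i => (y ^ i)⁻¹), ?_, ?_⟩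
  · simp [List.range_eq_nil]; omega
  · rw [List.map_map]
    have := com_aux x y q
    simp only [Function.comp_def, inv_inv]
    simpa using this.trans hcomm
end

section
/- Let p, q be integers with 2 ≤ p < q and gcd(p, q) = 1, and let G = ⟨x, y ∣ x^p = y^q⟩ be the group with this presentation (the (p,q)-torus knot group). Then, with commutator convention [a,b] = a⁻¹b⁻¹ab, the element [x, y] is a generalized torsion element of G; in particular [x, y] ≠ 1. -/
/-- The single relator `x^p y^{-q}` of the `(p,q)`-torus knot group
`⟨x, y ∣ x^p = y^q⟩`; generator `0` is `x` and generator `1` is `y`. -/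
def torusRels (p q : ℤ) : Set (FreeGroup (Fin 2)) :=
  {FreeGroup.of 0 ^ p * (FreeGroup.of 1 ^ q)⁻¹}

/-!
Since `x ^ p = y ^ q` commutes with `y`, the commutator `[x ^ p, y]` is trivial, and it telescopes
into a product of `p` conjugates of `[x, y]` by powers of `x`. That `[x, y] ≠ 1` is seen in the
permutations of `ZMod p × ZMod q`: `x` acts by shifting the first coordinate, `y` by shifting the
second coordinate over the fibre `{0} × ZMod q` only.
-/

section Commutator

variable {G : Type*} [Group G]

lemma com_eq_inv_mul (a b : G) : com a b = (b * a)⁻¹ * (a * b) := by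
  simp only [com, mul_inv_rev, mul_assoc]

lemma com_eq_one_iff {a b : G} : com a b = 1 ↔ Commute a b := by
  rw [com_eq_inv_mul, inv_mul_eq_one, eq_comm, commute_iff_eq]

lemma prod_map_conj_com_eq_com_pow (a b : G) (n : ℕ) :
    (((List.range n).reverse.map fun i => (a ^ i)⁻¹).map fun x => x * com a b * x⁻¹).prod =
      com (a ^ n) b := by
  induction n with
  | zero => simp [com]
  | succ n ih =>
    rw [List.range_succ, List.reverse_append, List.reverse_singleton, List.singleton_append,
      List.map_cons, List.map_cons, List.prod_cons, ih]
    simp only [com, pow_succ]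
    group

lemma isGeneralizedTorsion_com_of_commute_pow {a b : G} {n : ℕ} (hn : n ≠ 0)
    (hab : ¬Commute a b) (hcomm : Commute (a ^ n) b) : IsGeneralizedTorsion (com a b) := by
  refine ⟨mt com_eq_one_iff.mp hab, (List.range n).reverse.map fun i => (a ^ i)⁻¹, ?_, ?_⟩
  · simpa using hn
  · rw [prod_map_conj_com_eq_com_pow, com_eq_one_iff]
    exact hcomm

end Commutator

namespace torusRels

lemma of_zero_zpow_eq (p q : ℤ) :
    (PresentedGroup.of 0 : PresentedGroup (torusRels p q)) ^ p = PresentedGroup.of 1 ^ q := by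
  have hrel := PresentedGroup.one_of_mem (rels := torusRels p q) rfl
  rw [map_mul, map_inv, map_zpow, map_zpow] at hrel
  exact mul_inv_eq_one.mp hrel

lemma exists_hom_of_zpow_eq {H : Type*} [Group H] {p q : ℤ} {a b : H} (h : a ^ p = b ^ q) :
    ∃ φ : PresentedGroup (torusRels p q) →* H,
      φ (PresentedGroup.of 0) = a ∧ φ (PresentedGroup.of 1) = b := by
  have hlift : ∀ r ∈ torusRels p q, FreeGroup.lift ![a, b] r = 1 := by
    rintro r rfl
    simp [h]
  exact ⟨PresentedGroup.toGroup hlift, PresentedGroup.toGroup.of hlift,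
    PresentedGroup.toGroup.of hlift⟩

lemma not_commute_of_zero_of_one {H : Type*} [Group H] {p q : ℤ} {a b : H}
    (h : a ^ p = b ^ q) (hab : ¬Commute a b) :
    ¬Commute (PresentedGroup.of 0 : PresentedGroup (torusRels p q)) (PresentedGroup.of 1) := by
  obtain ⟨φ, hφa, hφb⟩ := exists_hom_of_zpow_eq h
  intro hxy
  exact hab (hφa ▸ hφb ▸ hxy.map φ)

end torusRels

section PermModel

variable (P Q : ℕ)

def shiftFst : Equiv.Perm (ZMod P × ZMod Q) where
  toFun z := (z.1 + 1, z.2)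
  invFun z := (z.1 - 1, z.2)
  left_inv z := by simp
  right_inv z := by simp

def shiftSndAtZero : Equiv.Perm (ZMod P × ZMod Q) where
  toFun z := (z.1, z.2 + if z.1 = 0 then 1 else 0)
  invFun z := (z.1, z.2 - if z.1 = 0 then 1 else 0)
  left_inv z := by simp
  right_inv z := by simp

lemma shiftFst_pow_apply (n : ℕ) (z : ZMod P × ZMod Q) :
    (shiftFst P Q ^ n) z = (z.1 + n, z.2) := by
  induction n with
  | zero => simp
  | succ n ih =>
    rw [pow_succ', Equiv.Perm.mul_apply, ih]
    simp only [shiftFst, Equiv.coe_fn_mk, Nat.cast_succ, add_assoc]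

lemma shiftSndAtZero_pow_apply (n : ℕ) (z : ZMod P × ZMod Q) :
    (shiftSndAtZero P Q ^ n) z = (z.1, z.2 + n * if z.1 = 0 then 1 else 0) := by
  induction n with
  | zero => simp
  | succ n ih =>
    rw [pow_succ', Equiv.Perm.mul_apply, ih]
    simp only [shiftSndAtZero, Equiv.coe_fn_mk, Nat.cast_succ]
    ring_nf

lemma shiftFst_pow_self : shiftFst P Q ^ P = 1 := by
  ext z <;> simp [shiftFst_pow_apply]

lemma shiftSndAtZero_pow_self : shiftSndAtZero P Q ^ Q = 1 := by
  ext z <;> simp [shiftSndAtZero_pow_apply]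

lemma not_commute_shiftFst_shiftSndAtZero [Nontrivial (ZMod P)] [Nontrivial (ZMod Q)] :
    ¬Commute (shiftFst P Q) (shiftSndAtZero P Q) := by
  intro h
  have h00 := congrArg (fun σ : Equiv.Perm (ZMod P × ZMod Q) => (σ (0, 0)).2) h.eq
  simp [shiftFst, shiftSndAtZero] at h00

end PermModel

theorem torusKnotGroup_commutator_isGeneralizedTorsion_general
    (p q : ℤ) (hp : 2 ≤ p) (hpq : p < q) :
    IsGeneralizedTorsion
      (com (PresentedGroup.of 0 : PresentedGroup (torusRels p q))
        (PresentedGroup.of 1)) := by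
  lift p to ℕ using (by omega)
  have : Nontrivial (ZMod p) := ZMod.nontrivial_iff.mpr (by omega)
  have : Nontrivial (ZMod q.natAbs) := ZMod.nontrivial_iff.mpr (by omega)
  have hmodel : shiftFst p q.natAbs ^ (p : ℤ) = shiftSndAtZero p q.natAbs ^ q := by
    rw [zpow_natCast, shiftFst_pow_self, eq_comm, ← pow_natAbs_eq_one, shiftSndAtZero_pow_self]
  have hrel := torusRels.of_zero_zpow_eq p q
  refine isGeneralizedTorsion_com_of_commute_pow (n := p) (by omega)
    (torusRels.not_commute_of_zero_of_one hmodel (not_commute_shiftFst_shiftSndAtZero _ _)) ?_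
  rw [← zpow_natCast, hrel]
  exact (Commute.refl _).zpow_left q

/-- In the `(p,q)`-torus knot group `⟨x, y ∣ x^p = y^q⟩` with
`2 ≤ p < q` and `gcd(p,q) = 1`, the commutator `[x,y]` is a generalized
torsion element; in particular `[x,y] ≠ 1`. -/
theorem torusKnotGroup_commutator_isGeneralizedTorsion
    (p q : ℤ) (hp : 2 ≤ p) (hpq : p < q) (hgcd : Int.gcd p q = 1) :
    IsGeneralizedTorsion
      (com (PresentedGroup.of 0 : PresentedGroup (torusRels p q))
        (PresentedGroup.of 1)) :=
  torusKnotGroup_commutator_isGeneralizedTorsion_general p q hp hpq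
end

section
/- Let G be a group, t, λ ∈ G, and let s ≥ 0 be an integer such that t^s λ ∈ ⟨⟨t⟩⟩⁺. Then for all integers n ≥ 1 and m ≥ ns, one has t^m λ^n ∈ ⟨⟨t⟩⟩⁺. (No commutativity of t and λ is assumed.) -/
lemma mul_mem_cps {G : Type*} [Group G] {g a b : G}
    (ha : a ∈ conjProdSet g) (hb : b ∈ conjProdSet g) : a * b ∈ conjProdSet g := by
  obtain ⟨xs, hxs, hpa⟩ := ha
  obtain ⟨ys, hys, hpb⟩ := hb
  exact ⟨xs ++ ys, by simp [hxs], by simp [hpa, hpb]⟩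

lemma conj_mem_cps {G : Type*} [Group G] {g a : G} (x : G)
    (ha : a ∈ conjProdSet g) : x * a * x⁻¹ ∈ conjProdSet g := by
  obtain ⟨xs, hxs, hpa⟩ := ha
  refine ⟨xs.map (fun y => x * y), by simpa using hxs, ?_⟩
  subst hpa
  rw [List.map_map]
  clear hxs
  induction xs with
  | nil => simp
  | cons hd tl ih =>
      simp only [List.map_cons, List.prod_cons, Function.comp]
      rw [ih]
      group

lemma pow_mem_cps {G : Type*} [Group G] (g : G) {k : ℕ} (hk : 1 ≤ k) :
    g ^ k ∈ conjProdSet g := by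
  refine ⟨List.replicate k 1, by simp; omega, ?_⟩
  simp [List.map_replicate, List.prod_replicate]

/-- If `t^s * l ∈ ⟨⟨t⟩⟩⁺` (no commutativity assumed), then for all `n ≥ 1` and
`m ≥ n * s` we have `t^m * l^n ∈ ⟨⟨t⟩⟩⁺`.  (Algebraic core of Theorem 5.1,
with `t` the meridian, `l` the longitude and `s = p - k`.) -/
theorem pow_mul_pow_mem_conjProdSet_of_pow_mul_mem {G : Type*} [Group G]
    (t l : G) (s : ℕ) (h : t ^ s * l ∈ conjProdSet t)
    (n m : ℕ) (hn : 1 ≤ n) (hm : n * s ≤ m) :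
    t ^ m * l ^ n ∈ conjProdSet t := by
  have hA : ∀ k : ℕ, 1 ≤ k → t ^ (k * s) * l ^ k ∈ conjProdSet t := by
    intro k hk
    induction k with
    | zero => omega
    | succ k ih =>
        rcases Nat.eq_or_lt_of_le hk with h1 | h1
        · simpa [← h1] using h
        · have hk' : 1 ≤ k := by omega
          have := conj_mem_cps l⁻¹ (ih hk')
          have h2 := mul_mem_cps h this
          have heq : t ^ s * l * (l⁻¹ * (t ^ (k * s) * l ^ k) * l⁻¹⁻¹) =
              t ^ ((k + 1) * s) * l ^ (k + 1) := by
            rw [add_mul, one_mul, pow_add, pow_succ]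
            group
          rwa [heq] at h2
  have hns := hA n hn
  rcases Nat.eq_or_lt_of_le hm with h1 | h1
  · rwa [← h1]
  · have hpos : 1 ≤ m - n * s := by omega
    have ht := pow_mem_cps t hpos
    have h2 := mul_mem_cps ht hns
    have heq : t ^ (m - n * s) * (t ^ (n * s) * l ^ n) = t ^ m * l ^ n := by
      rw [← mul_assoc, ← pow_add]
      congr 2
      omega
    rwa [heq] at h2
end
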